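/- Let w ∈ ℝⁿ be nonzero and let s⁽¹⁾, …, s⁽ᴺ⁾ ∈ ℝⁿ be vectors produced by the vector sampling scheme, so each s⁽ʲ⁾ has singleton support: s⁽ʲ⁾ = γ(w)·sign(w_{k_j})·e_{k_j} for some index k_j. Let S be the n×N matrix with columns s⁽ʲ⁾. Define y* ∈ ℝᴺ by y*_j = |w_{k_j}| / (γ(w)·n_j), where n_j = #{i : k_i = k_j}. Then y* minimizes ‖S y − w‖₂² over all y ∈ ℝᴺ with y ≥ 0 componentwise, and the minimum value equals Σ_{i ∉ D₁} w_i², where D₁ = {k_1, …, k_N} is the set of sampled indices. -/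

import Mathlib

/-!
Every sample is supported on a single coordinate, so `S y` vanishes on the coordinates that are
never sampled, and the objective is at least `∑_{i ∉ D₁} wᵢ²` for every `y`. The
weights `y*` split `|w_i| / γ` evenly among the `n_i` samples hitting a sampled coordinate `i`,
so `S y*` reproduces `w` exactly there and attains this bound.
-/

open Finset

lemma Real.sign_mul_abs (x : ℝ) : Real.sign x * |x| = x := by
  rcases lt_trichotomy x 0 with h | rfl | h
  · rw [Real.sign_of_neg h, abs_of_neg h]; ring
  · simp
  · rw [Real.sign_of_pos h, abs_of_pos h, one_mul]

lemma Real.mul_sign_mul_abs_div_of_abs_le {x γ : ℝ} (hx : |x| ≤ γ) :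
    γ * Real.sign x * (|x| / γ) = x := by
  rw [mul_comm γ, mul_assoc, mul_div_cancel_of_imp' fun h => (h ▸ hx).antisymm (abs_nonneg x),
    Real.sign_mul_abs]

section

variable {ι κ : Type*}

lemma sum_filter_sq_le_sum_sq_sub [Fintype κ] {p : κ → Prop} [DecidablePred p]
    (f w : κ → ℝ) (hf : ∀ i, p i → f i = 0) :
    ∑ i ∈ univ.filter p, w i ^ 2 ≤ ∑ i, (f i - w i) ^ 2 :=
  calc ∑ i ∈ univ.filter p, w i ^ 2 = ∑ i ∈ univ.filter p, (f i - w i) ^ 2 :=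
        sum_congr rfl fun i hi => by rw [hf i (mem_filter.mp hi).2]; ring
    _ ≤ ∑ i, (f i - w i) ^ 2 := sum_le_univ_sum_of_nonneg fun _ => sq_nonneg _

lemma sum_sq_sub_eq_sum_filter_sq [Fintype κ] {p : κ → Prop} [DecidablePred p]
    (f w : κ → ℝ) (hf : ∀ i, f i = if p i then 0 else w i) :
    ∑ i, (f i - w i) ^ 2 = ∑ i ∈ univ.filter p, w i ^ 2 := by
  rw [sum_filter]
  refine sum_congr rfl fun i _ => ?_
  split_ifs with h <;> simp [hf, h]

lemma sum_mul_ite_eq [Fintype ι] [DecidableEq κ] (y : ι → ℝ) (k : ι → κ) (a : κ → ℝ)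
    (i : κ) :
    ∑ j, y j * (if i = k j then a (k j) else 0) =
      a i * ∑ j ∈ univ.filter (fun j => k j = i), y j := by
  rw [mul_sum, sum_filter]
  refine sum_congr rfl fun j _ => ?_
  by_cases h : k j = i
  · simp [h, mul_comm]
  · simp [h, Ne.symm h]

lemma sum_filter_div_mul_card [Fintype ι] [DecidableEq κ] (k : ι → κ) {i : κ}
    (hi : ∃ j, k j = i) (x : κ → ℝ) (γ : ℝ) :
    ∑ j ∈ univ.filter (fun j => k j = i),
      x (k j) / (γ * (univ.filter fun j' => k j' = k j).card) = x i / γ := by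
  have hcard : ((univ.filter fun j => k j = i).card : ℝ) ≠ 0 := by
    obtain ⟨j, hj⟩ := hi
    exact Nat.cast_ne_zero.mpr (card_ne_zero.mpr ⟨j, by simp [hj]⟩)
  rw [sum_congr rfl fun j hj => by rw [(mem_filter.mp hj).2], sum_const, nsmul_eq_mul,
    ← div_div, mul_div_cancel₀ _ hcard]

end

theorem stmt2_general (n N : ℕ) (w : Fin n → ℝ)
    (γ : ℝ) (hγ : γ = ∑ i, |w i|)
    (k : Fin N → Fin n)
    (s : Fin N → Fin n → ℝ)
    (hs : ∀ j i, s j i = if i = k j then γ * Real.sign (w (k j)) else 0)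
    (ystar : Fin N → ℝ)
    (hy : ∀ j, ystar j =
      |w (k j)| / (γ * (Finset.univ.filter (fun i => k i = k j)).card)) :
    (∀ y : Fin N → ℝ, (∀ j, 0 ≤ y j) →
        ∑ i, (∑ j, ystar j * s j i - w i) ^ 2 ≤
          ∑ i, (∑ j, y j * s j i - w i) ^ 2) ∧
    ∑ i, (∑ j, ystar j * s j i - w i) ^ 2 =
      ∑ i ∈ Finset.univ.filter (fun i => ∀ j, k j ≠ i), (w i) ^ 2 := by
  have hfit (y : Fin N → ℝ) (i : Fin n) :
      ∑ j, y j * s j i =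
        γ * Real.sign (w i) * ∑ j ∈ univ.filter (fun j => k j = i), y j := by
    simp only [hs]
    exact sum_mul_ite_eq y k (fun i => γ * Real.sign (w i)) i
  have hunsampled (y : Fin N → ℝ) (i : Fin n) (hi : ∀ j, k j ≠ i) :
      ∑ j, y j * s j i = 0 := by
    rw [hfit, filter_false_of_mem fun j _ => hi j, sum_empty, mul_zero]
  have hdom (i : Fin n) : |w i| ≤ γ :=
    hγ ▸ single_le_sum (fun i _ => abs_nonneg (w i)) (mem_univ i)
  have hexact : ∑ i, (∑ j, ystar j * s j i - w i) ^ 2 =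
      ∑ i ∈ univ.filter (fun i => ∀ j, k j ≠ i), w i ^ 2 := by
    refine sum_sq_sub_eq_sum_filter_sq _ _ fun i => ?_
    split_ifs with hi
    · exact hunsampled ystar i hi
    · rw [hfit, sum_congr rfl fun j _ => hy j,
        sum_filter_div_mul_card k (not_forall_not.mp hi) (fun i => |w i|) γ,
        Real.mul_sign_mul_abs_div_of_abs_le (hdom i)]
  exact ⟨fun y _ => hexact ▸ sum_filter_sq_le_sum_sq_sub _ _ (hunsampled y), hexact⟩

/-- Least squares over nonnegative weights with singleton-support samples:
the explicit weights `y*_j = |w_{k_j}|/(γ(w)·n_j)` minimize `‖S y − w‖₂²`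
over `y ≥ 0`, and the minimum value is the mass of `w` on unsampled indices. -/
theorem stmt2 (n N : ℕ) (w : Fin n → ℝ) (hw : w ≠ 0)
    (γ : ℝ) (hγ : γ = ∑ i, |w i|)
    (k : Fin N → Fin n) (hk : ∀ j, w (k j) ≠ 0)
    (s : Fin N → Fin n → ℝ)
    (hs : ∀ j i, s j i = if i = k j then γ * Real.sign (w (k j)) else 0)
    (ystar : Fin N → ℝ)
    (hy : ∀ j, ystar j =
      |w (k j)| / (γ * (Finset.univ.filter (fun i => k i = k j)).card)) :
    (∀ y : Fin N → ℝ, (∀ j, 0 ≤ y j) →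
        ∑ i, (∑ j, ystar j * s j i - w i) ^ 2 ≤
          ∑ i, (∑ j, y j * s j i - w i) ^ 2) ∧
    ∑ i, (∑ j, ystar j * s j i - w i) ^ 2 =
      ∑ i ∈ Finset.univ.filter (fun i => ∀ j, k j ≠ i), (w i) ^ 2 :=
  stmt2_general n N w γ hγ k s hs ystar hy
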